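/- For any vertex x of BH_n (n ≥ 2), there is exactly one induced subgraph of BH_n isomorphic to K_{1,3}, vertex-disjoint from x, whose leaf set contains 3 neighbors of x; namely the star must be centered at the unique vertex whose coordinates agree with x except the first coordinate differs by 2 mod 4. -/

import Mathlib

/-!
A common neighbour `z` of `x` and `u` has `z 0 = x 0 ± 1 = u 0 ± 1`, so `u 0 ∈ {x 0, x 0 + 2}` and
`u`, `x` move their other coordinates by the same sign `(-1) ^ (x 0).val`. If `u` and `x` differed
in a coordinate `k ≠ 0`, a common neighbour would be determined by its first coordinate, which
takes only two values; so three common neighbours force `u` to agree with `x` off `0`, and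
`u ≠ x` leaves `u 0 = x 0 + 2`. Conversely, `x + 2e₀` is adjacent to `x ± e₀` and to
`x + e₀ + (-1) ^ (x 0).val • e₁`, all neighbours of `x`.
-/

/-- The `n`-dimensional balanced hypercube `BH_n` (Wu–Huang). Vertices are
elements of `{0,1,2,3}^n`; a vertex `(a_0,…,a_{n-1})` is adjacent to
`((a_0 ± 1) mod 4, a_1, …, a_{n-1})` and, for each `i ≠ 0`, to
`((a_0 ± 1) mod 4, …, (a_i + (-1)^{a_0}) mod 4, …, a_{n-1})`. -/
def balancedHypercube (n : ℕ) [NeZero n] :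
    SimpleGraph (Fin n → ZMod 4) :=
  SimpleGraph.fromRel (fun u v =>
    (v 0 = u 0 + 1 ∨ v 0 = u 0 - 1) ∧
    ((∀ i, i ≠ 0 → v i = u i) ∨
      ∃ j : Fin n, j ≠ 0 ∧ v j = u j + (-1 : ZMod 4) ^ (u 0).val ∧
        ∀ i, i ≠ 0 → i ≠ j → v i = u i))

namespace ZMod

theorem neg_one_pow_val_add_one (a : ZMod 4) : (-1 : ZMod 4) ^ (a + 1).val = -(-1) ^ a.val := by
  revert a; decide

theorem neg_one_pow_val_sub_one (a : ZMod 4) : (-1 : ZMod 4) ^ (a - 1).val = -(-1) ^ a.val := by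
  revert a; decide

theorem neg_one_pow_val_add_two (a : ZMod 4) : (-1 : ZMod 4) ^ (a + 2).val = (-1) ^ a.val := by
  revert a; decide

theorem eq_of_mem_pair_inter_mem_pair {t a b c c' : ZMod 4} (hab : a ≠ b)
    (hca : c = a ∨ c = a + (-1) ^ t.val) (hcb : c = b ∨ c = b + (-1) ^ t.val)
    (hca' : c' = a ∨ c' = a + (-1) ^ t.val) (hcb' : c' = b ∨ c' = b + (-1) ^ t.val) :
    c = c' := by
  revert t a b c c'; decide

theorem eq_or_eq_or_eq_of_add_one_or_sub_one {a b c d : ZMod 4} (hb : b = a + 1 ∨ b = a - 1)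
    (hc : c = a + 1 ∨ c = a - 1) (hd : d = a + 1 ∨ d = a - 1) : b = c ∨ b = d ∨ c = d := by
  revert a b c d; decide

theorem eq_or_eq_add_two_of_add_one_or_sub_one {a b c : ZMod 4} (hc : c = a + 1 ∨ c = a - 1)
    (hc' : c = b + 1 ∨ c = b - 1) : b = a ∨ b = a + 2 := by
  revert a b c; decide

end ZMod

namespace SimpleGraph

variable {V : Type*}

def IsK13CenterOver (G : SimpleGraph V) (x u : V) : Prop :=
  u ≠ x ∧ ¬ G.Adj x u ∧
    ∃ v w y : V, v ≠ w ∧ v ≠ y ∧ w ≠ y ∧ G.Adj u v ∧ G.Adj u w ∧ G.Adj u y ∧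
      G.Adj x v ∧ G.Adj x w ∧ G.Adj x y

end SimpleGraph

namespace BalancedHypercube

open Function

def Step (n : ℕ) [NeZero n] (u v : Fin n → ZMod 4) : Prop :=
  (v 0 = u 0 + 1 ∨ v 0 = u 0 - 1) ∧
    ((∀ i, i ≠ 0 → v i = u i) ∨
      ∃ j : Fin n, j ≠ 0 ∧ v j = u j + (-1 : ZMod 4) ^ (u 0).val ∧
        ∀ i, i ≠ 0 → i ≠ j → v i = u i)

variable {n : ℕ} [NeZero n] {u v x z : Fin n → ZMod 4}

theorem Step.ne (h : Step n u v) : u ≠ v := by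
  have key : ∀ a : ZMod 4, a ≠ a + 1 ∧ a ≠ a - 1 := by decide
  rintro rfl
  exact h.1.elim (key (u 0)).1 (key (u 0)).2

theorem Step.symm (h : Step n u v) : Step n v u := by
  obtain ⟨h0, hoff⟩ := h
  have hsgn : (-1 : ZMod 4) ^ (v 0).val = -(-1) ^ (u 0).val := by
    rcases h0 with h0 | h0
    · rw [h0, ZMod.neg_one_pow_val_add_one]
    · rw [h0, ZMod.neg_one_pow_val_sub_one]
  refine ⟨by rcases h0 with h0 | h0 <;> [right; left] <;> rw [h0] <;> ring, ?_⟩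
  rcases hoff with hoff | ⟨j, hj0, hj, hrest⟩
  · exact .inl fun i hi => (hoff i hi).symm
  · exact .inr ⟨j, hj0, by rw [hsgn, hj]; ring, fun i hi hij => (hrest i hi hij).symm⟩

theorem adj_iff_step : (balancedHypercube n).Adj u v ↔ Step n u v := by
  rw [balancedHypercube, SimpleGraph.fromRel_adj]
  exact ⟨fun ⟨_, h⟩ => h.elim id Step.symm, fun h => ⟨h.ne, .inl h⟩⟩

theorem Step.apply_of_ne_zero (h : Step n x z) {i : Fin n} (hi : i ≠ 0) :
    z i = x i ∨ z i = x i + (-1) ^ (x 0).val := by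
  rcases h.2 with hoff | ⟨j, -, hj, hrest⟩
  · exact .inl (hoff i hi)
  · by_cases hij : i = j
    · exact .inr (hij ▸ hj)
    · exact .inl (hrest i hi hij)

theorem Step.apply_eq_of_apply_ne (h : Step n x z) {i k : Fin n} (hi : i ≠ 0) (hk : k ≠ 0)
    (hik : i ≠ k) (hzk : z k ≠ x k) : z i = x i := by
  rcases h.2 with hoff | ⟨j, -, -, hrest⟩
  · exact hoff i hi
  · have hkj : k = j := by_contra fun hkj => hzk (hrest k hk hkj)
    exact hrest i hi (hkj ▸ hik)

/- `z k` is pinned down by `x k ≠ u k`; off the coordinates `0` and `k`, `z` then agrees with `x`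
if `z k ≠ x k` and with `u` otherwise. -/
theorem eq_of_common_step {u x z z' : Fin n → ZMod 4}
    (hsgn : (-1 : ZMod 4) ^ (u 0).val = (-1) ^ (x 0).val) {k : Fin n} (hk0 : k ≠ 0)
    (hk : u k ≠ x k) (hxz : Step n x z) (huz : Step n u z) (hxz' : Step n x z')
    (huz' : Step n u z') (h0 : z 0 = z' 0) : z = z' := by
  have hzk : z k = z' k := ZMod.eq_of_mem_pair_inter_mem_pair (Ne.symm hk)
    (hxz.apply_of_ne_zero hk0) (hsgn ▸ huz.apply_of_ne_zero hk0)
    (hxz'.apply_of_ne_zero hk0) (hsgn ▸ huz'.apply_of_ne_zero hk0)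
  funext i
  by_cases hi : i = 0
  · exact hi ▸ h0
  by_cases hik : i = k
  · exact hik ▸ hzk
  by_cases hzx : z k = x k
  · have hzu : z k ≠ u k := hzx ▸ Ne.symm hk
    rw [huz.apply_eq_of_apply_ne hi hk0 hik hzu,
      huz'.apply_eq_of_apply_ne hi hk0 hik (hzk ▸ hzu)]
  · rw [hxz.apply_eq_of_apply_ne hi hk0 hik hzx,
      hxz'.apply_eq_of_apply_ne hi hk0 hik (hzk ▸ hzx)]

theorem step_update_zero {a : ZMod 4} (ha : a = x 0 + 1 ∨ a = x 0 - 1) :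
    Step n x (update x 0 a) :=
  ⟨by rwa [update_self], .inl fun i hi => update_of_ne hi _ _⟩

theorem step_update_zero_update {a : ZMod 4} (ha : a = x 0 + 1 ∨ a = x 0 - 1) {j : Fin n}
    (hj : j ≠ 0) : Step n x (update (update x 0 a) j (x j + (-1) ^ (x 0).val)) := by
  refine ⟨by rwa [update_of_ne hj.symm, update_self], .inr ⟨j, hj, update_self .., ?_⟩⟩
  intro i hi hij
  rw [update_of_ne hij, update_of_ne hi]

theorem isK13CenterOver_update_zero_add_two (hn : 2 ≤ n) (x : Fin n → ZMod 4) :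
    (balancedHypercube n).IsK13CenterOver x (update x 0 (x 0 + 2)) := by
  set c := update x 0 (x 0 + 2)
  set j : Fin n := ⟨1, hn⟩
  have hj : j ≠ 0 := Fin.ne_of_val_ne one_ne_zero
  have hc0 : c 0 = x 0 + 2 := update_self ..
  have hcj : c j = x j := update_of_ne hj ..
  have hsgn : (-1 : ZMod 4) ^ (c 0).val = (-1) ^ (x 0).val := by
    rw [hc0, ZMod.neg_one_pow_val_add_two]
  have hc_step : ∀ {a : ZMod 4}, (a = x 0 + 1 ∨ a = x 0 - 1) → a = c 0 + 1 ∨ a = c 0 - 1 := by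
    rw [hc0]
    generalize x 0 = b
    revert b
    decide
  have hx_ne : ∀ b : ZMod 4, b + 2 ≠ b ∧ b + 2 ≠ b + 1 ∧ b + 2 ≠ b - 1 ∧ b + 1 ≠ b - 1 := by
    decide
  have hsgn_ne : ∀ b t : ZMod 4, b ≠ b + (-1) ^ t.val := by decide
  simp only [SimpleGraph.IsK13CenterOver, adj_iff_step]
  refine ⟨fun h => (hx_ne _).1 (hc0 ▸ congrFun h 0),
    fun h => h.1.elim (fun h => (hx_ne _).2.1 (hc0.symm.trans h))
      (fun h => (hx_ne _).2.2.1 (hc0.symm.trans h)),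
    update x 0 (x 0 + 1), update x 0 (x 0 - 1),
    update (update x 0 (x 0 + 1)) j (x j + (-1) ^ (x 0).val), ?_, ?_, ?_, ?_, ?_, ?_,
    step_update_zero (.inl rfl), step_update_zero (.inr rfl),
    step_update_zero_update (.inl rfl) hj⟩
  · intro h
    simpa using (hx_ne _).2.2.2 (congrFun h 0)
  · intro h
    simpa [hj.symm] using hsgn_ne (x j) (x 0) (congrFun h j)
  · intro h
    simpa [hj.symm] using (hx_ne _).2.2.2 (congrFun h 0).symm
  · simpa only [c, update_idem] using step_update_zero (x := c) (hc_step (.inl rfl))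
  · simpa only [c, update_idem] using step_update_zero (x := c) (hc_step (.inr rfl))
  · simpa only [c, update_idem, hcj, hsgn] using
      step_update_zero_update (x := c) (hc_step (.inl rfl)) hj

theorem eq_of_isK13CenterOver (h : (balancedHypercube n).IsK13CenterOver x u) :
    u = update x 0 (x 0 + 2) := by
  simp only [SimpleGraph.IsK13CenterOver, adj_iff_step] at h
  obtain ⟨hux, -, v, w, y, hvw, hvy, hwy, huv, huw, huy, hxv, hxw, hxy⟩ := h
  have hu0 := ZMod.eq_or_eq_add_two_of_add_one_or_sub_one hxv.1 huv.1
  have hsgn : (-1 : ZMod 4) ^ (u 0).val = (-1) ^ (x 0).val := by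
    rcases hu0 with h | h <;> rw [h]
    exact ZMod.neg_one_pow_val_add_two _
  have hoff : ∀ k, k ≠ 0 → u k = x k := by
    intro k hk0
    by_contra hk
    rcases ZMod.eq_or_eq_or_eq_of_add_one_or_sub_one hxv.1 hxw.1 hxy.1 with h | h | h
    exacts [hvw (eq_of_common_step hsgn hk0 hk hxv huv hxw huw h),
      hvy (eq_of_common_step hsgn hk0 hk hxv huv hxy huy h),
      hwy (eq_of_common_step hsgn hk0 hk hxw huw hxy huy h)]
  have hu0' : u 0 = x 0 + 2 := hu0.resolve_left fun h =>
    hux <| by rw [← update_eq_self 0 x, eq_update_iff]; exact ⟨h, hoff⟩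
  rw [eq_update_iff]
  exact ⟨hu0', hoff⟩

end BalancedHypercube

open BalancedHypercube in
/-- For any vertex `x` of `BH_n` (`n ≥ 2`), there is exactly one induced star
`K_{1,3}` of `BH_n` vertex-disjoint from `x` whose three leaves are neighbors of
`x`: its center must be the unique vertex agreeing with `x` in all coordinates
except that the first differs by `2` mod `4`. -/
theorem balancedHypercube_unique_K13_center (n : ℕ) [NeZero n] (hn : 2 ≤ n)
    (x : Fin n → ZMod 4) :
    (∃! u : Fin n → ZMod 4, u ≠ x ∧ ¬ (balancedHypercube n).Adj x u ∧
      ∃ v w y : Fin n → ZMod 4, v ≠ w ∧ v ≠ y ∧ w ≠ y ∧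
        (balancedHypercube n).Adj u v ∧ (balancedHypercube n).Adj u w ∧
        (balancedHypercube n).Adj u y ∧
        (balancedHypercube n).Adj x v ∧ (balancedHypercube n).Adj x w ∧
        (balancedHypercube n).Adj x y) ∧
    (∀ u : Fin n → ZMod 4, (u ≠ x ∧ ¬ (balancedHypercube n).Adj x u ∧
      ∃ v w y : Fin n → ZMod 4, v ≠ w ∧ v ≠ y ∧ w ≠ y ∧
        (balancedHypercube n).Adj u v ∧ (balancedHypercube n).Adj u w ∧
        (balancedHypercube n).Adj u y ∧
        (balancedHypercube n).Adj x v ∧ (balancedHypercube n).Adj x w ∧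
        (balancedHypercube n).Adj x y) →
      u = Function.update x 0 (x 0 + 2)) :=
  ⟨⟨_, isK13CenterOver_update_zero_add_two hn x, fun _ => eq_of_isK13CenterOver⟩,
    fun _ => eq_of_isK13CenterOver⟩
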